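/- If K and L are convex bodies in R^n with |K| = |L|, then N(K,L)^{1/n} ≤ 8·N(L,K)^{1/n}. -/

import Mathlib

/-!
Choose `v` so that the symmetric convex body `S = (L - v) ∩ (v - L)` has `|S| ≥ 2⁻ⁿ |L|`; such a
`v` exists because `x ↦ |L ∩ (2x - L)|` has average `2⁻ⁿ |L|` over `L` (Fubini). A maximal family
of disjoint translates `x + S/2` with `x ∈ K` lies in `K + S ⊆ K + L - v`, and the translates
`x + S ⊆ x - v + L` cover `K`. Covering `L` by `N(L,K)` translates of `K` gives
`|K + L| ≤ N(L,K) |2K| = 2ⁿ N(L,K) |L|`, so the family has at most `|K + L| / |S/2| ≤ 8ⁿ N(L,K)`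
members.
-/

open MeasureTheory Set
open scoped Pointwise

/-- Covering number: the least `N` such that `A` is covered by `N` translates of `B`. -/
noncomputable def covN {n : ℕ} (A B : Set (EuclideanSpace ℝ (Fin n))) : ℕ :=
  sInf {N : ℕ | ∃ F : Finset (EuclideanSpace ℝ (Fin n)), F.card = N ∧ A ⊆ ⋃ c ∈ F, c +ᵥ B}

open Module
open scoped ENNReal

section Symmetric

variable {V : Type*} [AddCommGroup V] [Module ℝ V] {S : Set V}

theorem Convex.inv_two_smul_sub_inv_two_smul (hS : Convex ℝ S) (hsymm : -S = S) :
    (2 : ℝ)⁻¹ • S - (2 : ℝ)⁻¹ • S = S := by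
  rw [sub_eq_add_neg, ← smul_set_neg, hsymm, ← hS.add_smul (by norm_num) (by norm_num)]
  norm_num

theorem Convex.zero_mem_of_neg_eq (hS : Convex ℝ S) (hsymm : -S = S) (hne : S.Nonempty) :
    (0 : V) ∈ S := by
  obtain ⟨z, hz⟩ := hne
  rw [← hS.inv_two_smul_sub_inv_two_smul hsymm]
  exact ⟨_, smul_mem_smul_set hz, _, smul_mem_smul_set hz, sub_self _⟩

end Symmetric

section Packing

variable {G : Type*} [AddGroup G] [MeasurableSpace G] [MeasurableAdd G] (μ : Measure G)
  [μ.IsAddLeftInvariant] {K T : Set G}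

theorem card_mul_measure_le_measure_add (hT : MeasurableSet T) {P : Finset G} (hPK : ↑P ⊆ K)
    (hP : (P : Set G).PairwiseDisjoint (· +ᵥ T)) : P.card * μ T ≤ μ (K + T) :=
  calc (P.card : ℝ≥0∞) * μ T = ∑ x ∈ P, μ (x +ᵥ T) := by
        simp only [measure_vadd, Finset.sum_const, nsmul_eq_mul]
    _ = μ (⋃ x ∈ P, x +ᵥ T) := (measure_biUnion_finset hP fun x _ ↦ hT.const_vadd x).symm
    _ ≤ μ (K + T) := measure_mono <| iUnion₂_subset fun x hx ↦ vadd_set_subset_add (hPK hx)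

theorem exists_finset_subset_iUnion_vadd_sub (hT : MeasurableSet T) (hT0 : μ T ≠ 0)
    (hKT : μ (K + T) ≠ ∞) :
    ∃ P : Finset G, P.card * μ T ≤ μ (K + T) ∧ K ⊆ ⋃ x ∈ P, x +ᵥ (T - T) := by
  classical
  -- Take a packing of maximal cardinality: a point of `K` it leaves uncovered could be added.
  let IsPacking (P : Finset G) : Prop := ↑P ⊆ K ∧ (P : Set G).PairwiseDisjoint (· +ᵥ T)
  let N := ⌊(μ (K + T) / μ T).toNNReal⌋₊
  have hN : ∀ P, IsPacking P → P.card ≤ N := fun P hP ↦ by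
    have := card_mul_measure_le_measure_add μ hT hP.1 hP.2
    rw [← ENNReal.le_div_iff_mul_le (.inl hT0) (.inr hKT)] at this
    exact Nat.le_floor <| by simpa using ENNReal.toNNReal_mono (ENNReal.div_ne_top hKT hT0) this
  let IsPackingCard (k : ℕ) : Prop := ∃ P, IsPacking P ∧ P.card = k
  obtain ⟨P, hP, hPcard⟩ : IsPackingCard (Nat.findGreatest IsPackingCard N) :=
    Nat.findGreatest_spec N.zero_le ⟨∅, by simp [IsPacking], rfl⟩
  refine ⟨P, card_mul_measure_le_measure_add μ hT hP.1 hP.2, fun y hy ↦ ?_⟩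
  by_contra hyP
  have hdisj : ∀ x ∈ P, Disjoint (y +ᵥ T) (x +ᵥ T) := by
    intro x hx
    refine Set.disjoint_left.2 ?_
    rintro _ ⟨a, ha, rfl⟩ ⟨b, hb, hab⟩
    exact hyP (mem_iUnion₂.2 ⟨x, hx, b - a, sub_mem_sub hb ha, by
      simp only [vadd_eq_add] at hab ⊢; rw [← add_sub_assoc, hab, add_sub_cancel_right]⟩)
  have hyP' : y ∉ P := by
    intro hy'
    obtain ⟨t, ht⟩ := nonempty_of_measure_ne_zero hT0
    exact hyP (mem_iUnion₂.2 ⟨y, hy', 0, ⟨t, ht, t, ht, sub_self t⟩, add_zero y⟩)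
  have hins : IsPacking (insert y P) := by
    refine ⟨?_, ?_⟩
    · simpa using insert_subset hy hP.1
    · simpa using hP.2.insert fun x hx _ ↦ hdisj x hx
  have := Nat.le_findGreatest (P := IsPackingCard) (hN _ hins) ⟨_, hins, rfl⟩
  rw [Finset.card_insert_of_notMem hyP', hPcard] at this
  omega

end Packing

section AddHaar

variable {E : Type*} [NormedAddCommGroup E] [NormedSpace ℝ E] [MeasurableSpace E] [BorelSpace E]
  [FiniteDimensional ℝ E] (μ : Measure E) [μ.IsAddHaarMeasure]

theorem addHaar_two_smul (s : Set E) : μ ((2 : ℝ) • s) = 2 ^ finrank ℝ E * μ s := by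
  rw [Measure.addHaar_smul_of_nonneg μ zero_le_two, ENNReal.ofReal_pow zero_le_two,
    ENNReal.ofReal_ofNat]

theorem addHaar_inv_two_smul (s : Set E) :
    μ ((2 : ℝ)⁻¹ • s) = (2 ^ finrank ℝ E)⁻¹ * μ s := by
  rw [Measure.addHaar_smul_of_nonneg μ (by norm_num), ENNReal.ofReal_pow (by norm_num),
    ENNReal.ofReal_inv_of_pos zero_lt_two, ENNReal.ofReal_ofNat, ENNReal.inv_pow]

theorem Convex.addHaar_add_le {K L : Set E} (hK : Convex ℝ K) {F : Finset E}
    (hL : L ⊆ ⋃ c ∈ F, c +ᵥ K) : μ (K + L) ≤ F.card * (2 ^ finrank ℝ E * μ K) :=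
  calc μ (K + L) ≤ μ (⋃ c ∈ F, c +ᵥ (2 : ℝ) • K) := by
        have hKK : (2 : ℝ) • K = K + K := by
          simpa only [one_add_one_eq_two, one_smul] using hK.add_smul zero_le_one zero_le_one
        refine measure_mono ((add_subset_add_left hL).trans ?_)
        simp only [add_iUnion₂, add_vadd_comm, hKK, Subset.rfl]
    _ ≤ ∑ c ∈ F, μ (c +ᵥ (2 : ℝ) • K) := measure_biUnion_finset_le F _
    _ = F.card * (2 ^ finrank ℝ E * μ K) := by
        simp only [measure_vadd, addHaar_two_smul, Finset.sum_const, nsmul_eq_mul]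

theorem Convex.exists_addHaar_inter_neg_ge {L : Set E} (hL : Convex ℝ L)
    (hLm : MeasurableSet L) (hLfin : μ L ≠ ∞) :
    ∃ v : E, (2 ^ finrank ℝ E)⁻¹ * μ L ≤ μ ((-v +ᵥ L) ∩ -(-v +ᵥ L)) := by
  set c : ℝ≥0∞ := (2 ^ finrank ℝ E)⁻¹ * μ L
  rcases eq_or_ne (μ L) 0 with hL0 | hL0
  · exact ⟨0, by simp [c, hL0]⟩
  let A : Set (E × E) := {p | p.2 ∈ L ∧ (2 : ℝ) • p.1 - p.2 ∈ L}
  have hA : MeasurableSet A :=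
    (hLm.preimage measurable_snd).inter (hLm.preimage (by fun_prop))
  let g : E → ℝ≥0∞ := fun x ↦ μ (Prod.mk x ⁻¹' A)
  -- `x` is the midpoint of `y` and `2x - y`
  have hg_support : g.support ⊆ L := by
    refine Function.support_subset_iff'.2 fun x hx ↦ ?_
    refine measure_mono_null (fun y ⟨hy, hy'⟩ ↦ hx ?_) measure_empty
    convert hL.midpoint_mem hy hy' using 1
    simp [midpoint_eq_smul_add, smul_smul]
  have hslice : ∀ y, μ ((fun x ↦ (x, y)) ⁻¹' A) = L.indicator (fun _ ↦ c) y := by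
    intro y
    by_cases hy : y ∈ L
    · have : (fun x ↦ (x, y)) ⁻¹' A = (2 : ℝ)⁻¹ • (y +ᵥ L) := by
        ext x
        simp [A, hy, mem_inv_smul_set_iff₀, mem_vadd_set_iff_neg_vadd_mem, neg_add_eq_sub]
      rw [this, addHaar_inv_two_smul, measure_vadd, indicator_of_mem hy]
    · rw [indicator_of_notMem hy]
      exact measure_mono_null (fun x hx ↦ hy hx.1) measure_empty
  have hint : ∫⁻ x in L, g x ∂μ = c * μ L :=
    calc ∫⁻ x in L, g x ∂μ = ∫⁻ x, g x ∂μ := setLIntegral_eq_of_support_subset hg_support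
      _ = μ.prod μ A := (Measure.prod_apply hA).symm
      _ = ∫⁻ y, L.indicator (fun _ ↦ c) y ∂μ := by
        rw [Measure.prod_apply_symm hA]; exact lintegral_congr hslice
      _ = c * μ L := lintegral_indicator_const hLm c
  obtain ⟨v, hv⟩ := exists_laverage_le (μ := μ.restrict L) (f := g)
    (by simpa using hL0) (by rw [hint]; finiteness)
  rw [setLAverage_eq, hint, ENNReal.mul_div_cancel_right hL0 hLfin] at hv
  refine ⟨v, hv.trans_eq ?_⟩
  rw [← measure_vadd μ v]
  show μ (Prod.mk v ⁻¹' A) = _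
  congr 1
  ext y
  have : v + (-y + v) = (2 : ℝ) • v - y := by module
  simp [A, mem_vadd_set_iff_neg_vadd_mem, this]

theorem Convex.exists_finset_subset_iUnion_vadd_of_neg_eq {K S : Set E} (hS : Convex ℝ S)
    (hsymm : -S = S) (hSm : MeasurableSet S) (hS0 : μ S ≠ 0) (hKS : μ (K + S) ≠ ∞) :
    ∃ P : Finset E, P.card * μ S ≤ 2 ^ finrank ℝ E * μ (K + S) ∧ K ⊆ ⋃ x ∈ P, x +ᵥ S := by
  set T := (2 : ℝ)⁻¹ • S
  have hTS : T ⊆ S := by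
    rintro _ ⟨s, hs, rfl⟩
    exact hS.smul_mem_of_zero_mem (hS.zero_mem_of_neg_eq hsymm (nonempty_of_measure_ne_zero hS0))
      hs ⟨by norm_num, by norm_num⟩
  have hKT : μ (K + T) ≤ μ (K + S) := measure_mono (add_subset_add_left hTS)
  have hST : μ S = 2 ^ finrank ℝ E * μ T := by
    rw [addHaar_inv_two_smul, ← mul_assoc, ENNReal.mul_inv_cancel (by positivity)
      (by finiteness), one_mul]
  obtain ⟨P, hPcard, hPcov⟩ := exists_finset_subset_iUnion_vadd_sub μ (hSm.const_smul₀ _)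
    (fun h : μ T = 0 ↦ hS0 (by simp [hST, h])) (ne_top_of_le_ne_top hKS hKT)
  refine ⟨P, ?_, by rwa [hS.inv_two_smul_sub_inv_two_smul hsymm] at hPcov⟩
  calc (P.card : ℝ≥0∞) * μ S = 2 ^ finrank ℝ E * (P.card * μ T) := by rw [hST]; ring
    _ ≤ 2 ^ finrank ℝ E * μ (K + S) := by gcongr; exact hPcard.trans hKT

theorem Convex.exists_finset_subset_iUnion_vadd_card_le {K L : Set E} (hK : Convex ℝ K)
    (hL : Convex ℝ L) (hLm : MeasurableSet L) (hL0 : μ L ≠ 0) (hLfin : μ L ≠ ∞)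
    (hKL : μ K = μ L) {F : Finset E} (hF : L ⊆ ⋃ c ∈ F, c +ᵥ K) :
    ∃ P : Finset E, K ⊆ ⋃ c ∈ P, c +ᵥ L ∧ P.card ≤ 8 ^ finrank ℝ E * F.card := by
  classical
  obtain ⟨v, hv⟩ := hL.exists_addHaar_inter_neg_ge μ hLm hLfin
  set L' := -v +ᵥ L
  set S := L' ∩ -L'
  have hSL' : S ⊆ L' := inter_subset_left
  have hLS : μ L ≤ 2 ^ finrank ℝ E * μ S := by
    rwa [← ENNReal.inv_mul_le_iff (by positivity) (by finiteness)]
  have hS0 : μ S ≠ 0 := fun h ↦ hL0 (by simpa [h] using hLS)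
  have hSfin : μ S ≠ ∞ := measure_ne_top_of_subset hSL' (by rwa [measure_vadd])
  have hKS : μ (K + S) ≤ F.card * (2 ^ finrank ℝ E * μ L) := by
    refine (measure_mono (add_subset_add_left hSL')).trans ?_
    rw [add_vadd_comm, measure_vadd, ← hKL]
    exact hK.addHaar_add_le μ hF
  have hS : Convex ℝ S := (hL.vadd _).inter (hL.vadd _).neg
  obtain ⟨P, hPcard, hPcov⟩ := hS.exists_finset_subset_iUnion_vadd_of_neg_eq μ
    (by rw [Set.inter_neg, neg_neg, inter_comm]) ((hLm.const_vadd _).inter (hLm.const_vadd _).neg)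
    hS0 (ne_top_of_le_ne_top (by finiteness) hKS)
  refine ⟨P.image (· + -v), ?_, Finset.card_image_le.trans ?_⟩
  · rw [Finset.set_biUnion_finset_image]
    refine hPcov.trans (iUnion₂_mono fun x _ ↦ ?_)
    rw [← vadd_vadd]
    exact vadd_set_mono hSL'
  · have : (P.card : ℝ≥0∞) * μ S ≤ (8 ^ finrank ℝ E * F.card : ℕ) * μ S :=
      calc (P.card : ℝ≥0∞) * μ S ≤ 2 ^ finrank ℝ E * (F.card * (2 ^ finrank ℝ E * μ L)) := by
            grw [hPcard, hKS]
        _ ≤ 2 ^ finrank ℝ E * (F.card * (2 ^ finrank ℝ E * (2 ^ finrank ℝ E * μ S))) := by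
          gcongr
        _ = (8 ^ finrank ℝ E * F.card : ℕ) * μ S := by
          push_cast
          rw [show (8 : ℝ≥0∞) = 2 * 2 * 2 by norm_num, mul_pow, mul_pow]
          ring
    exact_mod_cast (ENNReal.mul_le_mul_iff_left hS0 hSfin).1 this

end AddHaar

section Covering

variable {n : ℕ} {A B : Set (EuclideanSpace ℝ (Fin n))}

theorem covN_le_card {F : Finset (EuclideanSpace ℝ (Fin n))} (h : A ⊆ ⋃ c ∈ F, c +ᵥ B) :
    covN A B ≤ F.card :=
  Nat.sInf_le ⟨F, rfl, h⟩

theorem exists_card_eq_covN (hA : IsCompact A) (hB : (interior B).Nonempty) :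
    ∃ F : Finset (EuclideanSpace ℝ (Fin n)), F.card = covN A B ∧ A ⊆ ⋃ c ∈ F, c +ᵥ B := by
  obtain ⟨b, hb⟩ := hB
  obtain ⟨F, hF⟩ := hA.elim_finite_subcover (fun c ↦ c +ᵥ interior B)
    (fun c ↦ isOpen_interior.vadd c)
    (fun y _ ↦ mem_iUnion.2 ⟨y - b, by simpa [mem_vadd_set_iff_neg_vadd_mem] using hb⟩)
  have hcover : {N | ∃ F : Finset (EuclideanSpace ℝ (Fin n)),
      F.card = N ∧ A ⊆ ⋃ c ∈ F, c +ᵥ B}.Nonempty :=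
    ⟨F.card, F, rfl, hF.trans (iUnion₂_mono fun c _ ↦ vadd_set_mono interior_subset)⟩
  exact Nat.sInf_mem hcover

theorem covN_le_eight_pow_mul_covN {K L : Set (EuclideanSpace ℝ (Fin n))} (hKconv : Convex ℝ K)
    (hK0 : (interior K).Nonempty) (hLconv : Convex ℝ L) (hLcomp : IsCompact L)
    (hL0 : (interior L).Nonempty) (hvol : volume K = volume L) :
    covN K L ≤ 8 ^ n * covN L K := by
  obtain ⟨F, hFcard, hF⟩ := exists_card_eq_covN hLcomp hK0
  obtain ⟨P, hP, hPcard⟩ := hKconv.exists_finset_subset_iUnion_vadd_card_le volume hLconv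
    hLcomp.measurableSet (Measure.measure_pos_of_nonempty_interior _ hL0).ne'
    hLcomp.measure_ne_top hvol hF
  rw [finrank_euclideanSpace_fin, hFcard] at hPcard
  exact (covN_le_card hP).trans hPcard

end Covering

theorem Real.rpow_one_div_le_mul_of_le_pow_mul {x y c : ℝ} {n : ℕ} (hx : 0 ≤ x) (hy : 0 ≤ y)
    (hc : 1 ≤ c) (h : x ≤ c ^ n * y) : x ^ (1 / n : ℝ) ≤ c * y ^ (1 / n : ℝ) := by
  rcases eq_or_ne n 0 with rfl | hn
  · simpa using hc
  calc x ^ (1 / n : ℝ) ≤ (c ^ n * y) ^ (1 / n : ℝ) := by gcongr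
    _ = c * y ^ (1 / n : ℝ) := by
      rw [Real.mul_rpow (by positivity) hy, one_div, Real.pow_rpow_inv_natCast (by positivity) hn]

theorem statement9_general (n : ℕ) (K L : Set (EuclideanSpace ℝ (Fin n)))
    (hKconv : Convex ℝ K) (hK0 : (interior K).Nonempty)
    (hLconv : Convex ℝ L) (hLcomp : IsCompact L) (hL0 : (interior L).Nonempty)
    (hvol : volume K = volume L) :
    (covN K L : ℝ) ^ ((1 : ℝ) / n) ≤ 8 * (covN L K : ℝ) ^ ((1 : ℝ) / n) :=
  Real.rpow_one_div_le_mul_of_le_pow_mul (Nat.cast_nonneg _) (Nat.cast_nonneg _) (by norm_num)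
    (by exact_mod_cast covN_le_eight_pow_mul_covN hKconv hK0 hLconv hLcomp hL0 hvol)

/-- If `K` and `L` are convex bodies in ℝⁿ of equal volume, then
`N(K,L)^{1/n} ≤ 8 N(L,K)^{1/n}`. -/
theorem statement9 (n : ℕ) (hn : 0 < n) (K L : Set (EuclideanSpace ℝ (Fin n)))
    (hKconv : Convex ℝ K) (hKcomp : IsCompact K) (hK0 : (interior K).Nonempty)
    (hLconv : Convex ℝ L) (hLcomp : IsCompact L) (hL0 : (interior L).Nonempty)
    (hvol : volume K = volume L) :
    (covN K L : ℝ) ^ ((1 : ℝ) / n) ≤ 8 * (covN L K : ℝ) ^ ((1 : ℝ) / n) :=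
  statement9_general n K L hKconv hK0 hLconv hLcomp hL0 hvol
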